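/- Assume the setup for induced HNN sequences: {G_i, λ_i} is an inverse sequence of groups, for each i there are subgroups H_i, H_i′ ≤ G_i and an isomorphism φ_i : H_i → H_i′, and for each i ≥ 1 one has λ_i(H_i) ⊆ H_{i−1}, λ_i(H_i′) ⊆ H_{i−1}′, and φ_{i−1}(λ_i(h)) = λ_i(φ_i(h)) for all h ∈ H_i. Suppose in addition that the inverse sequences {G_i, λ_i} and {H_i, μ_i}, where μ_i is the restriction of λ_i to H_i, are stable (hence so is {H_i′, μ_i′} with μ_i′ the restriction of λ_i to H_i′). Then the componentwise map (h_i)_{i≥0} ↦ (φ_i(h_i))_{i≥0} defines an isomorphism from the inverse limit lim{H_i, μ_i} onto the inverse limit lim{H_i′, μ_i′}, both viewed as subgroups of lim{G_i, λ_i}, and the induced HNN sequence {G_i∗_{φ_i}, λ̄_i} is stable. -/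

import Mathlib

universe u

/-- The composite bonding homomorphism `λ_{i,j} : G_j →* G_i` of an inverse sequence of
groups, for `i ≤ j`. -/
def invSeqComp {G : ℕ → Type u} [∀ i, Group (G i)] (lam : ∀ i, G (i + 1) →* G i)
    {i j : ℕ} (h : i ≤ j) : G j →* G i :=
  Nat.leRecOn h (fun {k} f => f.comp (lam k)) (MonoidHom.id (G i))

/-- An inverse sequence of groups is **pro-monomorphic** if there exists `i` such that for
every `j ≥ i` there exists `k₀ ≥ j` with `ker (λ_{i,k}) = ker (λ_{j,k})` for all `k ≥ k₀`. -/
def ProMono {G : ℕ → Type u} [∀ i, Group (G i)] (lam : ∀ i, G (i + 1) →* G i) : Prop :=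
  ∃ i : ℕ, ∀ j : ℕ, ∀ hij : i ≤ j, ∃ k₀ : ℕ, ∃ hjk₀ : j ≤ k₀, ∀ k : ℕ, ∀ hk₀k : k₀ ≤ k,
    (invSeqComp lam (hij.trans (hjk₀.trans hk₀k))).ker =
      (invSeqComp lam (hjk₀.trans hk₀k)).ker

/-- An inverse sequence of groups is **semistable** (Mittag-Leffler) if for every `i` there
exists `j ≥ i` such that `Im (λ_{i,k}) = Im (λ_{i,j})` for all `k ≥ j`. -/
def Semistable {G : ℕ → Type u} [∀ i, Group (G i)] (lam : ∀ i, G (i + 1) →* G i) : Prop :=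
  ∀ i : ℕ, ∃ j : ℕ, ∃ hij : i ≤ j, ∀ k : ℕ, ∀ hjk : j ≤ k,
    (invSeqComp lam (hij.trans hjk)).range = (invSeqComp lam hij).range

/-- An inverse sequence of groups is **stable** if it is pro-monomorphic and semistable. -/
def Stable {G : ℕ → Type u} [∀ i, Group (G i)] (lam : ∀ i, G (i + 1) →* G i) : Prop :=
  ProMono lam ∧ Semistable lam

/-- The inverse limit of an inverse sequence of groups, as a subgroup of the product. -/
def invLim {G : ℕ → Type u} [∀ i, Group (G i)] (lam : ∀ i, G (i + 1) →* G i) :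
    Subgroup (∀ i, G i) where
  carrier := {x | ∀ i, lam i (x (i + 1)) = x i}
  one_mem' := fun i => map_one (lam i)
  mul_mem' := by
    intro a b ha hb i
    simp only [Pi.mul_apply, map_mul, ha i, hb i]
  inv_mem' := by
    intro a ha i
    simp only [Pi.inv_apply, map_inv, ha i]

/-!
Semistability of the HNN sequence comes from the base sequence alone: the image of `λ̄_{i,k}` is
generated by `t` and the image of `λ_{i,k}`. For pro-monomorphy take `i₀` witnessing it for
`{G_i}` and `j₁ ≥ i₀` a semistability index of `{H_i}` (hence of `{H'_i}`, via `φ`) at `i₀`.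
If `λ̄_{j₁,k}` kills a word in `t` and `G_k`, Britton's lemma says the image word either has no
`t` or contains a pinch `t^u λ_{j₁,k}(g) t^-u`. In the first case `ker λ_{j₁,k} ≤ ker λ_{i₀,k} =
ker λ_{j,k}`; in the second, `g` can be replaced by an element of `H_k` or `H'_k` with the same
image at levels `j` and `j₁`, and the word becomes shorter.
-/

theorem List.exists_eq_append_cons_cons_of_not_isChain {α : Type*} {R : α → α → Prop} :
    ∀ {l : List α}, ¬ l.IsChain R → ∃ l₁ a b l₂, l = l₁ ++ a :: b :: l₂ ∧ ¬ R a b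
  | [], h => absurd .nil h
  | [_], h => absurd (.singleton _) h
  | x :: y :: l, h => by
    by_cases hxy : R x y
    · obtain ⟨l₁, a, b, l₂, hl, hab⟩ :=
        exists_eq_append_cons_cons_of_not_isChain fun hyl => h (hyl.cons_cons hxy)
      exact ⟨x :: l₁, a, b, l₂, by rw [hl]; rfl, hab⟩
    · exact ⟨[], x, y, l, rfl, hxy⟩

section InverseSequence

variable {G : ℕ → Type u} [∀ i, Group (G i)] (lam : ∀ i, G (i + 1) →* G i)

theorem invSeqComp_self (i : ℕ) : invSeqComp lam (le_refl i) = MonoidHom.id (G i) :=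
  Nat.leRecOn_self _

theorem invSeqComp_succ {i k : ℕ} (h : i ≤ k) :
    invSeqComp lam (h.trans k.le_succ) = (invSeqComp lam h).comp (lam k) :=
  Nat.leRecOn_succ h _

theorem invSeqComp_trans {i j k : ℕ} (hij : i ≤ j) (hjk : j ≤ k) :
    invSeqComp lam (hij.trans hjk) = (invSeqComp lam hij).comp (invSeqComp lam hjk) := by
  induction k, hjk using Nat.le_induction with
  | base => rw [invSeqComp_self]; rfl
  | succ k hjk ih => rw [invSeqComp_succ lam (hij.trans hjk), invSeqComp_succ lam hjk, ih]; rfl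

theorem ker_invSeqComp_le_ker_invSeqComp_trans {i j k : ℕ} (hij : i ≤ j) (hjk : j ≤ k) :
    (invSeqComp lam hjk).ker ≤ (invSeqComp lam (hij.trans hjk)).ker := by
  intro x hx
  rw [MonoidHom.mem_ker] at hx ⊢
  rw [invSeqComp_trans lam hij hjk, MonoidHom.comp_apply, hx, map_one]

theorem invSeqComp_apply_of_mem_invLim {x : ∀ i, G i} (hx : x ∈ invLim lam) {i k : ℕ}
    (h : i ≤ k) : invSeqComp lam h (x k) = x i := by
  induction k, h using Nat.le_induction with
  | base => rw [invSeqComp_self]; rfl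
  | succ k hik ih => rw [invSeqComp_succ lam hik, MonoidHom.comp_apply, hx k, ih]

theorem comp_invSeqComp {G' : ℕ → Type u} [∀ i, Group (G' i)] (lam' : ∀ i, G' (i + 1) →* G' i)
    (α : ∀ i, G i →* G' i) (hα : ∀ i, (α i).comp (lam i) = (lam' i).comp (α (i + 1)))
    {i k : ℕ} (h : i ≤ k) :
    (α i).comp (invSeqComp lam h) = (invSeqComp lam' h).comp (α k) := by
  induction k, h using Nat.le_induction with
  | base => rw [invSeqComp_self, invSeqComp_self]; rfl
  | succ k hik ih =>
    rw [invSeqComp_succ lam hik, invSeqComp_succ lam' hik, ← MonoidHom.comp_assoc, ih,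
      MonoidHom.comp_assoc, hα, MonoidHom.comp_assoc]

theorem range_invSeqComp_of_mulEquiv {G' : ℕ → Type u} [∀ i, Group (G' i)]
    (lam' : ∀ i, G' (i + 1) →* G' i) (e : ∀ i, G i ≃* G' i)
    (he : ∀ i, (e i).toMonoidHom.comp (lam i) = (lam' i).comp (e (i + 1)).toMonoidHom)
    {i k : ℕ} (h : i ≤ k) :
    (invSeqComp lam' h).range = (invSeqComp lam h).range.map (e i).toMonoidHom := by
  have hsurj : (e k).toMonoidHom.range = ⊤ :=
    MonoidHom.range_eq_top_of_surjective _ (e k).surjective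
  rw [← MonoidHom.range_comp, comp_invSeqComp lam lam' _ he h, MonoidHom.range_comp, hsurj,
    ← MonoidHom.range_eq_map]

end InverseSequence

section Restriction

variable {G : ℕ → Type u} [∀ i, Group (G i)] (lam : ∀ i, G (i + 1) →* G i)
  (K : ∀ i, Subgroup (G i)) (nu : ∀ i, K (i + 1) →* K i)
  (hnu : ∀ i (x : K (i + 1)), ((nu i x : K i) : G i) = lam i (x : G (i + 1)))
include hnu

theorem coe_invSeqComp {i k : ℕ} (h : i ≤ k) (x : K k) :
    ((invSeqComp (G := fun i => K i) nu h x : K i) : G i) = invSeqComp lam h (x : G k) :=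
  DFunLike.congr_fun (comp_invSeqComp (G := fun i => K i) nu lam (fun i => (K i).subtype)
    (fun i => MonoidHom.ext (hnu i)) h) x

theorem exists_mem_invSeqComp_eq {i j k : ℕ} (hij : i ≤ j) (hjk : j ≤ k)
    (hrange : (invSeqComp (G := fun i => K i) nu (hij.trans hjk)).range =
      (invSeqComp (G := fun i => K i) nu hij).range)
    {g : G k} (hg : invSeqComp lam hjk g ∈ K j) :
    ∃ a ∈ K k, invSeqComp lam (hij.trans hjk) g = invSeqComp lam (hij.trans hjk) a := by
  obtain ⟨a, ha⟩ : invSeqComp (G := fun i => K i) nu hij ⟨_, hg⟩ ∈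
      (invSeqComp (G := fun i => K i) nu (hij.trans hjk)).range := hrange ▸ ⟨_, rfl⟩
  refine ⟨a, a.2, ?_⟩
  rw [← coe_invSeqComp lam K nu hnu, ha, coe_invSeqComp lam K nu hnu, invSeqComp_trans lam hij hjk]
  rfl

end Restriction

theorem MulEquiv.symm_comp_eq_comp_symm {M N P Q : Type*} [Group M] [Group N] [Group P] [Group Q]
    (e : M ≃* N) (e' : P ≃* Q) (f : P →* M) (g : Q →* N)
    (h : e.toMonoidHom.comp f = g.comp e'.toMonoidHom) :
    e.symm.toMonoidHom.comp g = f.comp e'.symm.toMonoidHom := by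
  ext x
  apply e.injective
  simpa using (DFunLike.congr_fun h (e'.symm x)).symm

section LimitIso

variable {G : ℕ → Type u} [∀ i, Group (G i)] (lam : ∀ i, G (i + 1) →* G i)
  (K K' : ∀ i, Subgroup (G i)) (nu : ∀ i, K (i + 1) →* K i) (nu' : ∀ i, K' (i + 1) →* K' i)
  (hnu : ∀ i (x : K (i + 1)), ((nu i x : K i) : G i) = lam i (x : G (i + 1)))
  (hnu' : ∀ i (x : K' (i + 1)), ((nu' i x : K' i) : G i) = lam i (x : G (i + 1)))

theorem mem_of_mem_invLim_inf_pi {x : ∀ i, G i} (hx : x ∈ invLim lam ⊓ Subgroup.pi Set.univ K)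
    (i : ℕ) : x i ∈ K i :=
  (Subgroup.mem_inf.1 hx).2 i (Set.mem_univ i)

def invLimPiMap (ψ : ∀ i, K i →* K' i) (hψ : ∀ i, (ψ i).comp (nu i) = (nu' i).comp (ψ (i + 1))) :
    (invLim lam ⊓ Subgroup.pi Set.univ K : Subgroup (∀ i, G i)) →*
      (invLim lam ⊓ Subgroup.pi Set.univ K' : Subgroup (∀ i, G i)) :=
  MonoidHom.mk' (fun x => ⟨fun i => ψ i ⟨x.1 i, mem_of_mem_invLim_inf_pi lam K x.2 i⟩,
    Subgroup.mem_inf.2 ⟨fun i => by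
      have hx : nu i ⟨x.1 (i + 1), mem_of_mem_invLim_inf_pi lam K x.2 (i + 1)⟩ =
          ⟨x.1 i, mem_of_mem_invLim_inf_pi lam K x.2 i⟩ :=
        Subtype.ext ((hnu i _).trans ((Subgroup.mem_inf.1 x.2).1 i))
      rw [← hnu', ← MonoidHom.comp_apply, ← hψ, MonoidHom.comp_apply, hx],
      (Subgroup.mem_pi _).2 fun i _ => (ψ i _).2⟩⟩)
    fun x y => Subtype.ext <| funext fun i => by
      simp only [Subgroup.coe_mul, Pi.mul_apply]
      rw [← Subgroup.coe_mul, ← map_mul]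
      rfl

def invLimPiMulEquiv (e : ∀ i, K i ≃* K' i)
    (he : ∀ i, (e i).toMonoidHom.comp (nu i) = (nu' i).comp (e (i + 1)).toMonoidHom) :
    (invLim lam ⊓ Subgroup.pi Set.univ K : Subgroup (∀ i, G i)) ≃*
      (invLim lam ⊓ Subgroup.pi Set.univ K' : Subgroup (∀ i, G i)) :=
  (invLimPiMap lam K K' nu nu' hnu hnu' (fun i => e i) he).toMulEquiv
    (invLimPiMap lam K' K nu' nu hnu' hnu (fun i => (e i).symm)
      fun i => MulEquiv.symm_comp_eq_comp_symm _ _ _ _ (he i))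
    (by ext x i; simp [invLimPiMap]) (by ext x i; simp [invLimPiMap])

end LimitIso

namespace HNNExtension

section Words

variable {G : Type*} [Group G] {A B : Subgroup G} (φ : A ≃* B)

/-- The formula of `NormalWord.ReducedWord.prod`, for words that need not be reduced. -/
def wordProd (hd : G) (l : List (ℤˣ × G)) : HNNExtension G A B φ :=
  of hd * (l.map fun p => t ^ (p.1 : ℤ) * of p.2).prod

theorem exists_wordProd_eq (x : HNNExtension G A B φ) : ∃ hd l, wordProd φ hd l = x := by
  obtain ⟨d⟩ := NormalWord.TransversalPair.nonempty G A B
  exact ⟨_, _, (NormalWord.equiv φ d).symm_apply_apply x⟩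

theorem wordProd_nil (hd : G) : wordProd φ hd [] = of hd := by
  simp [wordProd]

theorem wordProd_append_cons (hd : G) (L₁ L₂ : List (ℤˣ × G)) (p : ℤˣ × G) :
    wordProd φ hd (L₁ ++ p :: L₂) =
      wordProd φ hd L₁ * (t ^ (p.1 : ℤ) * of p.2) * wordProd φ 1 L₂ := by
  simp [wordProd, mul_assoc]

theorem map_wordProd_append_cons_congr {N : Type*} [Group N] (F : HNNExtension G A B φ →* N)
    {g a : G} (h : F (of g) = F (of a)) (hd : G) (L₁ L₂ : List (ℤˣ × G)) (u : ℤˣ) :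
    F (wordProd φ hd (L₁ ++ (u, g) :: L₂)) = F (wordProd φ hd (L₁ ++ (u, a) :: L₂)) := by
  simp only [wordProd_append_cons, map_mul, h]

theorem exists_wordProd_mul_of_mul_wordProd (hd x : G) (L₁ L₂ : List (ℤˣ × G)) :
    ∃ hd' l', wordProd φ hd L₁ * of x * wordProd φ 1 L₂ = wordProd φ hd' l' ∧
      l'.length = L₁.length + L₂.length := by
  rcases L₁.eq_nil_or_concat with rfl | ⟨L₁, p, rfl⟩
  · exact ⟨hd * x, L₂, by simp [wordProd, mul_assoc], by simp⟩
  · exact ⟨hd, L₁ ++ (p.1, p.2 * x) :: L₂, by simp [wordProd, mul_assoc], by simp; omega⟩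

theorem t_zpow_mul_of_mul_t_zpow_neg (u : ℤˣ) (a : toSubgroup A B u) :
    t ^ (u : ℤ) * of (a : G) * t ^ (-(u : ℤ)) =
      (of (toSubgroupEquiv φ u a : G) : HNNExtension G A B φ) := by
  rcases Int.units_eq_one_or u with rfl | rfl
  · rw [Units.val_one, zpow_one, zpow_neg_one]
    exact (equiv_eq_conj a).symm
  · rw [Units.val_neg, Units.val_one, neg_neg, zpow_one, zpow_neg_one]
    exact (equiv_symm_eq_conj a).symm

theorem exists_wordProd_eq_of_pinch (hd g : G) (L₁ L₂ : List (ℤˣ × G)) (u : ℤˣ) {a : G}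
    (ha : a ∈ toSubgroup A B u) :
    ∃ hd' l', wordProd φ hd (L₁ ++ (u, a) :: (-u, g) :: L₂) = wordProd φ hd' l' ∧
      l'.length = L₁.length + L₂.length := by
  obtain ⟨hd', l', h, hl⟩ := exists_wordProd_mul_of_mul_wordProd φ hd
    (toSubgroupEquiv φ u ⟨a, ha⟩ * g) L₁ L₂
  refine ⟨hd', l', ?_, hl⟩
  rw [← h, map_mul, ← t_zpow_mul_of_mul_t_zpow_neg]
  simp [wordProd, mul_assoc]

theorem closure_range_of_union_t :
    Subgroup.closure (Set.range of ∪ {t}) = (⊤ : Subgroup (HNNExtension G A B φ)) :=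
  eq_top_iff.2 fun x _ => induction_on x
    (fun g => Subgroup.subset_closure (Or.inl ⟨g, rfl⟩))
    (Subgroup.subset_closure (Or.inr rfl))
    (fun _ _ => Subgroup.mul_mem _) (fun _ => Subgroup.inv_mem _)

end Words

section Maps

variable {G G' M : Type*} [Group G] [Group G'] [Group M] {A B : Subgroup G} {φ : A ≃* B}
  {A' B' : Subgroup G'} {φ' : A' ≃* B'} (θ : G →* G')
  (f : HNNExtension G A B φ →* HNNExtension G' A' B' φ')

theorem map_wordProd (hf : f.comp of = of.comp θ) (ht : f t = t) (hd : G) (l : List (ℤˣ × G)) :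
    f (wordProd φ hd l) = wordProd φ' (θ hd) (l.map (Prod.map id θ)) := by
  have hf' : ∀ g, f (of g) = of (θ g) := DFunLike.congr_fun hf
  simp [wordProd, map_list_prod, hf', ht, Function.comp_def]

theorem range_eq_closure (hf : f.comp of = of.comp θ) (ht : f t = t) :
    f.range = Subgroup.closure (of '' θ.range ∪ {t}) := by
  rw [MonoidHom.range_eq_map, ← closure_range_of_union_t, MonoidHom.map_closure, Set.image_union,
    Set.image_singleton, ht, ← Set.range_comp, ← MonoidHom.coe_comp, hf, MonoidHom.coe_comp,
    Set.range_comp, MonoidHom.coe_range]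

end Maps

section Kernels

variable {G G' M : Type*} [Group G] [Group G'] [Group M] {A B : Subgroup G} {φ : A ≃* B}
  {A' B' : Subgroup G'} {φ' : A' ≃* B'}

/-- By Britton's lemma, the image of a word in `ker f` is either free of `t` or contains a pinch
`t ^ u * of (θ g) * t ^ (-u)`; replacing `g` by a lift `a` (which changes neither image) turns it
into a pinch of the word itself, which can then be shortened. -/
theorem wordProd_mem_ker_of_mem_ker (θ : G →* G')
    (f : HNNExtension G A B φ →* HNNExtension G' A' B' φ')
    (f' : HNNExtension G A B φ →* M) (hf : f.comp of = of.comp θ) (ht : f t = t)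
    (hker : f'.ker ≤ f.ker) (hθ : θ.ker ≤ (f'.comp of).ker)
    (hlift : ∀ u g, θ g ∈ toSubgroup A' B' u → ∃ a ∈ toSubgroup A B u, f' (of g) = f' (of a))
    (hd : G) (l : List (ℤˣ × G)) (h : wordProd φ hd l ∈ f.ker) : wordProd φ hd l ∈ f'.ker := by
  by_cases hred : l.IsChain fun p q => θ p.2 ∈ toSubgroup A' B' p.1 → p.1 = q.1
  · have hnil : l.map (Prod.map id θ) = [] :=
      ReducedWord.toList_eq_nil_of_mem_of_range (φ := φ')
        ⟨θ hd, _, List.isChain_map _ |>.2 hred⟩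
        ⟨1, by rw [map_one]; exact ((map_wordProd θ f hf ht hd l).symm.trans h).symm⟩
    rw [List.map_eq_nil_iff] at hnil
    subst hnil
    rw [wordProd_nil] at h ⊢
    rw [MonoidHom.mem_ker, ← MonoidHom.comp_apply, hf, MonoidHom.comp_apply,
      ← map_one of, (of_injective (φ := φ')).eq_iff] at h
    exact hθ h
  obtain ⟨L₁, ⟨u, g⟩, ⟨v, g'⟩, L₂, rfl, hpinch⟩ :=
    List.exists_eq_append_cons_cons_of_not_isChain hred
  push Not at hpinch
  obtain ⟨hmem, hne⟩ := hpinch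
  obtain rfl : v = -u := Int.units_ne_iff_eq_neg.1 (Ne.symm hne)
  obtain ⟨a, ha, hf'a⟩ := hlift u g hmem
  have hfa : f (of g) = f (of a) := f.eq_iff.2 (hker (f'.eq_iff.1 hf'a))
  obtain ⟨hd', l', hw, hlen⟩ := exists_wordProd_eq_of_pinch φ hd g' L₁ L₂ u ha
  rw [MonoidHom.mem_ker, map_wordProd_append_cons_congr φ f hfa, hw] at h
  rw [MonoidHom.mem_ker, map_wordProd_append_cons_congr φ f' hf'a, hw]
  exact wordProd_mem_ker_of_mem_ker θ f f' hf ht hker hθ hlift hd' l' h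
termination_by l.length
decreasing_by simp_all

theorem ker_le_ker_of_forall_lift (θ : G →* G')
    (f : HNNExtension G A B φ →* HNNExtension G' A' B' φ')
    (f' : HNNExtension G A B φ →* M) (hf : f.comp of = of.comp θ) (ht : f t = t)
    (hker : f'.ker ≤ f.ker) (hθ : θ.ker ≤ (f'.comp of).ker)
    (hlift : ∀ u g, θ g ∈ toSubgroup A' B' u → ∃ a ∈ toSubgroup A B u, f' (of g) = f' (of a)) :
    f.ker ≤ f'.ker := by
  intro x hx
  obtain ⟨hd, l, rfl⟩ := exists_wordProd_eq φ x
  exact wordProd_mem_ker_of_mem_ker θ f f' hf ht hker hθ hlift hd l hx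

end Kernels

end HNNExtension

theorem mulEquiv_comp_restrict_eq_restrict_comp {G : ℕ → Type u} [∀ i, Group (G i)]
    (lam : ∀ i, G (i + 1) →* G i) (H H' : ∀ i, Subgroup (G i)) (φ : ∀ i, H i ≃* H' i)
    (hcomp : ∀ i (h : H (i + 1)) (hm : lam i (h : G (i + 1)) ∈ H i),
      ((φ i) ⟨lam i (h : G (i + 1)), hm⟩ : G i) = lam i ((φ (i + 1)) h))
    (mu : ∀ i, H (i + 1) →* H i) (mu' : ∀ i, H' (i + 1) →* H' i)
    (hmu : ∀ i (h : H (i + 1)), ((mu i h : H i) : G i) = lam i (h : G (i + 1)))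
    (hmu' : ∀ i (h : H' (i + 1)), ((mu' i h : H' i) : G i) = lam i (h : G (i + 1))) (i : ℕ) :
    (φ i).toMonoidHom.comp (mu i) = (mu' i).comp (φ (i + 1)).toMonoidHom := by
  ext h
  have hh : mu i h = ⟨lam i h, hmu i h ▸ (mu i h).2⟩ := Subtype.ext (hmu i h)
  simp [hh, hmu', hcomp]

section InducedHNN

open HNNExtension

variable {G : ℕ → Type u} [∀ i, Group (G i)] (lam : ∀ i, G (i + 1) →* G i)
  (H H' : ∀ i, Subgroup (G i)) (φ : ∀ i, H i ≃* H' i)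
  (lamBar : ∀ i, HNNExtension (G (i + 1)) (H (i + 1)) (H' (i + 1)) (φ (i + 1)) →*
    HNNExtension (G i) (H i) (H' i) (φ i))
  (hof : ∀ i (g : G (i + 1)), lamBar i (of g) = of (lam i g))
  (ht : ∀ i, lamBar i t = t)

include hof in
theorem invSeqComp_comp_of {i k : ℕ} (h : i ≤ k) :
    (invSeqComp (G := fun i => HNNExtension (G i) (H i) (H' i) (φ i)) lamBar h).comp of =
      of.comp (invSeqComp lam h) :=
  (comp_invSeqComp lam lamBar (fun _ => of) (fun i => MonoidHom.ext fun g => (hof i g).symm) h).symm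

include ht in
theorem invSeqComp_t {i k : ℕ} (h : i ≤ k) :
    invSeqComp (G := fun i => HNNExtension (G i) (H i) (H' i) (φ i)) lamBar h t = t :=
  invSeqComp_apply_of_mem_invLim (G := fun i => HNNExtension (G i) (H i) (H' i) (φ i)) lamBar
    (x := fun _ => t) ht h

include hof ht in
theorem semistable_induced_hnn (hG : Semistable lam) :
    Semistable (G := fun i => HNNExtension (G i) (H i) (H' i) (φ i)) lamBar := by
  intro i
  obtain ⟨j, hij, hrange⟩ := hG i
  refine ⟨j, hij, fun k hjk => ?_⟩
  rw [range_eq_closure _ _ (invSeqComp_comp_of lam H H' φ lamBar hof _)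
      (invSeqComp_t H H' φ lamBar ht _),
    range_eq_closure _ _ (invSeqComp_comp_of lam H H' φ lamBar hof _)
      (invSeqComp_t H H' φ lamBar ht _), hrange k hjk]

include hof ht in
/-- `j₁` is a semistability index of `{H_i}`, hence of `{H'_i}`, over `i₀`: an element of `G_k`
sent into an associated subgroup at level `j₁` agrees modulo `ker λ_{i₀,k} = ker λ_{j,k}` with an
element of the associated subgroup of `G_k`, which is the lifting hypothesis of
`HNNExtension.ker_le_ker_of_forall_lift`. -/
theorem ker_invSeqComp_induced_hnn_le {i₀ j₁ j k : ℕ} (hi₀j₁ : i₀ ≤ j₁) (hj₁j : j₁ ≤ j)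
    (hjk : j ≤ k)
    (hker : (invSeqComp lam ((hi₀j₁.trans hj₁j).trans hjk)).ker = (invSeqComp lam hjk).ker)
    (mu : ∀ i, H (i + 1) →* H i) (mu' : ∀ i, H' (i + 1) →* H' i)
    (hmu : ∀ i (h : H (i + 1)), ((mu i h : H i) : G i) = lam i (h : G (i + 1)))
    (hmu' : ∀ i (h : H' (i + 1)), ((mu' i h : H' i) : G i) = lam i (h : G (i + 1)))
    (hφ : ∀ i, (φ i).toMonoidHom.comp (mu i) = (mu' i).comp (φ (i + 1)).toMonoidHom)
    (hrange : (invSeqComp (G := fun i => H i) mu (hi₀j₁.trans (hj₁j.trans hjk))).range =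
      (invSeqComp (G := fun i => H i) mu hi₀j₁).range) :
    (invSeqComp (G := fun i => HNNExtension (G i) (H i) (H' i) (φ i)) lamBar
        (hj₁j.trans hjk)).ker ≤
      (invSeqComp (G := fun i => HNNExtension (G i) (H i) (H' i) (φ i)) lamBar hjk).ker := by
  have hrange' : (invSeqComp (G := fun i => H' i) mu' (hi₀j₁.trans (hj₁j.trans hjk))).range =
      (invSeqComp (G := fun i => H' i) mu' hi₀j₁).range := by
    rw [range_invSeqComp_of_mulEquiv _ _ φ hφ, range_invSeqComp_of_mulEquiv _ _ φ hφ, hrange]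
  have hlevel : ∀ g a : G k, invSeqComp lam (hi₀j₁.trans (hj₁j.trans hjk)) g =
      invSeqComp lam (hi₀j₁.trans (hj₁j.trans hjk)) a →
      invSeqComp (G := fun i => HNNExtension (G i) (H i) (H' i) (φ i)) lamBar hjk (of g) =
        invSeqComp (G := fun i => HNNExtension (G i) (H i) (H' i) (φ i)) lamBar hjk (of a) := by
    intro g a hga
    rw [← MonoidHom.comp_apply, ← MonoidHom.comp_apply, invSeqComp_comp_of lam H H' φ lamBar hof]
    exact congrArg of ((invSeqComp lam hjk).eq_iff.2 (hker ▸ (MonoidHom.eq_iff _).1 hga))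
  refine ker_le_ker_of_forall_lift _ _ _ (invSeqComp_comp_of lam H H' φ lamBar hof _)
    (invSeqComp_t H H' φ lamBar ht _) (ker_invSeqComp_le_ker_invSeqComp_trans _ hj₁j hjk) ?_ ?_
  · rw [invSeqComp_comp_of lam H H' φ lamBar hof,
      MonoidHom.ker_comp_of_injective _ _ (of_injective _), ← hker]
    exact ker_invSeqComp_le_ker_invSeqComp_trans lam hi₀j₁ (hj₁j.trans hjk)
  · intro u g hg
    rcases Int.units_eq_one_or u with rfl | rfl
    · obtain ⟨a, ha, hga⟩ := exists_mem_invSeqComp_eq lam H mu hmu hi₀j₁ (hj₁j.trans hjk) hrange hg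
      exact ⟨a, ha, hlevel g a hga⟩
    · obtain ⟨a, ha, hga⟩ :=
        exists_mem_invSeqComp_eq lam H' mu' hmu' hi₀j₁ (hj₁j.trans hjk) hrange' hg
      exact ⟨a, ha, hlevel g a hga⟩

include hof ht in
theorem proMono_induced_hnn (hG : ProMono lam)
    (mu : ∀ i, H (i + 1) →* H i) (mu' : ∀ i, H' (i + 1) →* H' i)
    (hmu : ∀ i (h : H (i + 1)), ((mu i h : H i) : G i) = lam i (h : G (i + 1)))
    (hmu' : ∀ i (h : H' (i + 1)), ((mu' i h : H' i) : G i) = lam i (h : G (i + 1)))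
    (hφ : ∀ i, (φ i).toMonoidHom.comp (mu i) = (mu' i).comp (φ (i + 1)).toMonoidHom)
    (hH : Semistable (G := fun i => H i) mu) :
    ProMono (G := fun i => HNNExtension (G i) (H i) (H' i) (φ i)) lamBar := by
  obtain ⟨i₀, hpro⟩ := hG
  obtain ⟨j₁, hi₀j₁, hsemi⟩ := hH i₀
  refine ⟨j₁, fun j hj₁j => ?_⟩
  obtain ⟨k₀, hjk₀, hker⟩ := hpro j (hi₀j₁.trans hj₁j)
  refine ⟨k₀, hjk₀, fun k hk₀k =>
    le_antisymm ?_ (ker_invSeqComp_le_ker_invSeqComp_trans _ hj₁j (hjk₀.trans hk₀k))⟩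
  exact ker_invSeqComp_induced_hnn_le lam H H' φ lamBar hof ht hi₀j₁ hj₁j (hjk₀.trans hk₀k)
    (hker k hk₀k) mu mu' hmu hmu' hφ (hsemi k (hj₁j.trans (hjk₀.trans hk₀k)))

end InducedHNN

theorem induced_HNN_sequence_stable_of_stable_general
    {G : ℕ → Type u} [∀ i, Group (G i)] (lam : ∀ i, G (i + 1) →* G i)
    (H H' : ∀ i, Subgroup (G i)) (φ : ∀ i, H i ≃* H' i)
    (hcomp : ∀ i (h : H (i + 1)) (hm : lam i (h : G (i + 1)) ∈ H i),
      ((φ i) ⟨lam i (h : G (i + 1)), hm⟩ : G i) = lam i ((φ (i + 1)) h))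
    -- `μ_i` and `μ_i'`, the restrictions of `λ_i` to the associated subgroups:
    (mu : ∀ i, H (i + 1) →* H i) (mu' : ∀ i, H' (i + 1) →* H' i)
    (hmu : ∀ i (h : H (i + 1)), ((mu i h : H i) : G i) = lam i (h : G (i + 1)))
    (hmu' : ∀ i (h : H' (i + 1)), ((mu' i h : H' i) : G i) = lam i (h : G (i + 1)))
    -- stability hypotheses:
    (hGstable : Stable lam)
    (hHstable : Stable (G := fun i => H i) mu) :
    -- the componentwise map `(h_i) ↦ (φ_i h_i)` is an isomorphism
    -- `lim {H_i, μ_i} ≃* lim {H_i', μ_i'}`, both viewed as subgroups of `lim {G_i, λ_i}`: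
    (∃ e : (invLim lam ⊓ Subgroup.pi Set.univ H : Subgroup (∀ i, G i)) ≃*
        (invLim lam ⊓ Subgroup.pi Set.univ H' : Subgroup (∀ i, G i)),
      ∀ (x : (invLim lam ⊓ Subgroup.pi Set.univ H : Subgroup (∀ i, G i))) (i : ℕ)
        (hm : (x : ∀ i, G i) i ∈ H i),
        ((e x : ∀ i, G i) i) = ((φ i) ⟨(x : ∀ i, G i) i, hm⟩ : G i)) ∧
    -- and the induced HNN sequence is stable:
    ∀ (lamBar : ∀ i, HNNExtension (G (i + 1)) (H (i + 1)) (H' (i + 1)) (φ (i + 1)) →*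
        HNNExtension (G i) (H i) (H' i) (φ i)),
      (∀ i (g : G (i + 1)), lamBar i (HNNExtension.of g) = HNNExtension.of (lam i g)) →
      (∀ i, lamBar i HNNExtension.t = HNNExtension.t) →
      Stable (G := fun i => HNNExtension (G i) (H i) (H' i) (φ i)) lamBar := by
  have hφ := mulEquiv_comp_restrict_eq_restrict_comp lam H H' φ hcomp mu mu' hmu hmu'
  refine ⟨⟨invLimPiMulEquiv lam H H' mu mu' hmu hmu' φ hφ, fun x i hm => rfl⟩,
    fun lamBar hof ht => ⟨?_, semistable_induced_hnn lam H H' φ lamBar hof ht hGstable.2⟩⟩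
  exact proMono_induced_hnn lam H H' φ lamBar hof ht hGstable.1 mu mu' hmu hmu' hφ hHstable.2

/-- In the setup for induced HNN sequences, if the base sequence
`{G_i, λ_i}` and the sequence `{H_i, μ_i}` of associated subgroups (with `μ_i` the
restriction of `λ_i`, and hence also `{H_i', μ_i'}`) are stable, then the componentwise map
`(h_i) ↦ (φ_i(h_i))` defines an isomorphism from `lim {H_i, μ_i}` onto `lim {H_i', μ_i'}`
(both viewed as subgroups of `lim {G_i, λ_i}`), and the induced HNN sequence
`{G_i∗_{φ_i}, λ̄_i}` is stable. -/
theorem induced_HNN_sequence_stable_of_stable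
    {G : ℕ → Type u} [∀ i, Group (G i)] (lam : ∀ i, G (i + 1) →* G i)
    (H H' : ∀ i, Subgroup (G i)) (φ : ∀ i, H i ≃* H' i)
    (hH : ∀ i, ∀ h ∈ H (i + 1), lam i h ∈ H i)
    (hH' : ∀ i, ∀ h ∈ H' (i + 1), lam i h ∈ H' i)
    (hcomp : ∀ i (h : H (i + 1)) (hm : lam i (h : G (i + 1)) ∈ H i),
      ((φ i) ⟨lam i (h : G (i + 1)), hm⟩ : G i) = lam i ((φ (i + 1)) h))
    -- `μ_i` and `μ_i'`, the restrictions of `λ_i` to the associated subgroups: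
    (mu : ∀ i, H (i + 1) →* H i) (mu' : ∀ i, H' (i + 1) →* H' i)
    (hmu : ∀ i (h : H (i + 1)), ((mu i h : H i) : G i) = lam i (h : G (i + 1)))
    (hmu' : ∀ i (h : H' (i + 1)), ((mu' i h : H' i) : G i) = lam i (h : G (i + 1)))
    -- stability hypotheses:
    (hGstable : Stable lam)
    (hHstable : Stable (G := fun i => H i) mu) :
    -- the componentwise map `(h_i) ↦ (φ_i h_i)` is an isomorphism
    -- `lim {H_i, μ_i} ≃* lim {H_i', μ_i'}`, both viewed as subgroups of `lim {G_i, λ_i}`: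
    (∃ e : (invLim lam ⊓ Subgroup.pi Set.univ H : Subgroup (∀ i, G i)) ≃*
        (invLim lam ⊓ Subgroup.pi Set.univ H' : Subgroup (∀ i, G i)),
      ∀ (x : (invLim lam ⊓ Subgroup.pi Set.univ H : Subgroup (∀ i, G i))) (i : ℕ)
        (hm : (x : ∀ i, G i) i ∈ H i),
        ((e x : ∀ i, G i) i) = ((φ i) ⟨(x : ∀ i, G i) i, hm⟩ : G i)) ∧
    -- and the induced HNN sequence is stable:
    ∀ (lamBar : ∀ i, HNNExtension (G (i + 1)) (H (i + 1)) (H' (i + 1)) (φ (i + 1)) →*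
        HNNExtension (G i) (H i) (H' i) (φ i)),
      (∀ i (g : G (i + 1)), lamBar i (HNNExtension.of g) = HNNExtension.of (lam i g)) →
      (∀ i, lamBar i HNNExtension.t = HNNExtension.t) →
      Stable (G := fun i => HNNExtension (G i) (H i) (H' i) (φ i)) lamBar :=
  induced_HNN_sequence_stable_of_stable_general lam H H' φ hcomp mu mu' hmu hmu' hGstable hHstable
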